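/- arXiv:1512.03135 — 3 statements merged into one kernel-verified Lean document; each statement's English description precedes it below -/
import Mathlib

section
/- Let M be a *-algebra of operators, p a projection, and Δ a 2-local triple derivation on A = pM. Then there exist skew-hermitian elements a₁ ∈ pMp and b₁ ∈ M such that Δ(p) = a₁p + pb₁. Explicitly, one may take a₁ = Δ(p)p and b₁ = Δ(p)(1−p) − (1−p)Δ(p)*. -/
/-- The triple product `{x,y,z} = (x y* z + z y* x)/2` on an operator *-algebra. -/
noncomputable def optp {M : Type*} [Ring M] [Algebra ℂ M] [StarRing M] (x y z : M) : M :=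
  (2⁻¹ : ℂ) • (x * star y * z + z * star y * x)

/-- If `Δ` is a 2-local triple derivation on `A = pM`, then there are
skew-hermitian `a₁ ∈ pMp` and `b₁ ∈ M` with `Δ(p) = a₁ p + p b₁`; explicitly one may
take `a₁ = Δ(p) p` and `b₁ = Δ(p)(1-p) - (1-p) Δ(p)*`. -/
theorem two_local_triple_derivation_at_p
    {M : Type*} [Ring M] [Algebra ℂ M] [StarRing M] [StarModule ℂ M]
    (p : M) (hp : p * p = p) (hps : star p = p)
    (Δ : M → M)
    (h2local : ∀ x y : M, p * x = x → p * y = y → ∃ D : M →ₗ[ℂ] M,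
      (∀ w : M, p * w = w → p * D w = D w) ∧
      (∀ a b c : M, p * a = a → p * b = b → p * c = c →
        D (optp a b c) = optp (D a) b c + optp a (D b) c + optp a b (D c)) ∧
      Δ x = D x ∧ Δ y = D y) :
    ∃ a₁ b₁ : M, a₁ = p * a₁ * p ∧ star a₁ = -a₁ ∧ star b₁ = -b₁ ∧
      Δ p = a₁ * p + p * b₁ ∧
      a₁ = Δ p * p ∧ b₁ = Δ p * (1 - p) - (1 - p) * star (Δ p) := by
  obtain ⟨D, hD1, hD2, hΔ, -⟩ := h2local p p hp hp
  have hpΔ : p * Δ p = Δ p := by rw [hΔ]; exact hD1 p hp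
  have hppp : optp p p p = p := by
    simp only [optp, hps, hp]
    rw [← two_smul ℂ p, smul_smul]
    norm_num
  have hkey0 := hD2 p p p hp hp hp
  rw [hppp, ← hΔ] at hkey0
  have e1 : optp (Δ p) p p = (2⁻¹ : ℂ) • (Δ p * p + Δ p) := by
    rw [optp, hps, mul_assoc (Δ p) p p, hp, hpΔ]
  have e2 : optp p (Δ p) p = (2⁻¹ : ℂ) • (p * star (Δ p) * p + p * star (Δ p) * p) := by
    simp only [optp]
  have e3 : optp p p (Δ p) = (2⁻¹ : ℂ) • (Δ p + Δ p * p) := by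
    rw [optp, hps, mul_assoc (Δ p) p p, hp, hpΔ]
  rw [e1, e2, e3] at hkey0
  have key : Δ p * p = -(p * star (Δ p) * p) := by
    have h2 : (2 : ℂ) • Δ p = (2 : ℂ) • ((2⁻¹ : ℂ) • (Δ p * p + Δ p)
        + (2⁻¹ : ℂ) • (p * star (Δ p) * p + p * star (Δ p) * p)
        + (2⁻¹ : ℂ) • (Δ p + Δ p * p)) := by rw [← hkey0]
    rw [smul_add, smul_add, smul_smul, smul_smul, smul_smul] at h2
    norm_num at h2
    rw [two_smul] at h2
    set x := Δ p * p
    set X := p * star (Δ p) * p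
    set d := Δ p
    have h4 : x + X + (x + X) = (x + d + (X + X) + (d + x)) - (d + d) := by abel
    rw [← h2, sub_self] at h4
    have h5 : (2 : ℂ) • (x + X) = 0 := by rw [two_smul]; exact h4
    rcases smul_eq_zero.mp h5 with h | h
    · norm_num at h
    · exact eq_neg_of_add_eq_zero_left h
  have hstarkey : p * star (Δ p) = -(Δ p * p) := by
    have h := congrArg star key
    rw [star_mul, star_neg, star_mul, star_mul, hps, star_star] at h
    rw [h]
    congr 1
    rw [← mul_assoc, hpΔ]
  have hpq : p * (1 - p) = 0 := by rw [mul_sub, mul_one, hp, sub_self]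
  refine ⟨Δ p * p, Δ p * (1 - p) - (1 - p) * star (Δ p), ?_, ?_, ?_, ?_, rfl, rfl⟩
  · rw [← mul_assoc, hpΔ, mul_assoc, hp]
  · rw [star_mul, hps, hstarkey]
  · rw [star_sub, star_mul, star_mul, star_star, star_sub, star_one, hps, neg_sub]
  · rw [mul_assoc, hp, mul_sub, ← mul_assoc p (Δ p), hpΔ, ← mul_assoc p (1 - p), hpq,
      zero_mul, sub_zero, mul_sub, mul_one]
    abel
end

section
/- Let M be a *-algebra with unit, p a projection in M, and D a triple derivation on A = pM (triple product {x,y,z}=(xy*z+zy*x)/2) such that D vanishes on the Peirce-2 space A₂(p) = pMp. Then D(x)y* + xD(y)* = 0 for all x, y ∈ A. -/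
/-- If a triple derivation `D` on `A = pM` vanishes on the Peirce-2
space `pMp`, then `D(x) y* + x D(y)* = 0` for all `x, y ∈ A`. -/
theorem triple_derivation_vanishing_on_peirce_two
    {M : Type*} [Ring M] [Algebra ℂ M] [StarRing M] [StarModule ℂ M]
    (p : M) (hp : p * p = p) (hps : star p = p)
    (D : M →ₗ[ℂ] M)
    (hDA : ∀ w : M, p * w = w → p * D w = D w)
    (hLeib : ∀ a b c : M, p * a = a → p * b = b → p * c = c →
      D (optp a b c) = optp (D a) b c + optp a (D b) c + optp a b (D c))
    (hD0 : ∀ x : M, x = p * x * p → D x = 0) :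
    ∀ x y : M, p * x = x → p * y = y → D x * star y + x * star (D y) = 0 := by
  have cancel : ∀ a b : M, (2⁻¹ : ℂ) • a = (2⁻¹ : ℂ) • b → a = b := by
    intro a b h
    have h2 := congrArg (fun m : M => (2 : ℂ) • m) h
    simpa [smul_smul, show (2 : ℂ) * 2⁻¹ = 1 by norm_num] using h2
  have hDp : D p = 0 := hD0 p (by rw [hp, hp])
  -- D vanishes on z*p for z ∈ pM
  have hDzp : ∀ z : M, p * z = z → D (z * p) = 0 := by
    intro z hz
    exact hD0 (z * p) (by rw [← mul_assoc, hz, mul_assoc, hp])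
  -- Peirce invariance: D z * p = 0 for z ∈ pM
  have hDright : ∀ z : M, p * z = z → D z * p = 0 := by
    intro z hz
    have h1 : optp p p z = (2⁻¹ : ℂ) • (z + z * p) := by
      rw [optp, hps, hp, hz, mul_assoc, hp]
    have h2 := hLeib p p z hp hp hz
    rw [h1, hDp] at h2
    have h3 : optp (0 : M) p z = 0 := by simp [optp]
    have h4 : optp p (0 : M) z = 0 := by simp [optp]
    have h5 : optp p p (D z) = (2⁻¹ : ℂ) • (D z + D z * p) := by
      rw [optp, hps, hp, hDA z hz, mul_assoc, hp]
    rw [h3, h4, h5, map_smul, map_add, hDzp z hz, add_zero, zero_add, zero_add] at h2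
    have h6 : D z = D z + D z * p := cancel _ _ h2
    exact (left_eq_add.mp h6).symm ▸ rfl
  intro x y hx hy
  set x1 := x - x * p with hx1def
  set y1 := y - y * p with hy1def
  have hpx1 : p * x1 = x1 := by rw [hx1def, mul_sub, hx, ← mul_assoc, hx]
  have hpy1 : p * y1 = y1 := by rw [hy1def, mul_sub, hy, ← mul_assoc, hy]
  have hx1p : x1 * p = 0 := by rw [hx1def, sub_mul, mul_assoc, hp, sub_self]
  have hy1p : y1 * p = 0 := by rw [hy1def, sub_mul, mul_assoc, hp, sub_self]
  have hDx1 : D x1 = D x := by rw [hx1def, map_sub, hDzp x hx, sub_zero]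
  have hDy1 : D y1 = D y := by rw [hy1def, map_sub, hDzp y hy, sub_zero]
  -- star facts
  have hsy1p : star y1 * p = star y1 := by rw [← hps, ← star_mul, hpy1]
  have hpsy1 : p * star y1 = 0 := by rw [← hps, ← star_mul, hy1p, star_zero]
  have hDx1p : D x1 * p = 0 := hDright x1 hpx1
  have hDy1p : D y1 * p = 0 := hDright y1 hpy1
  have hpDy1 : p * D y1 = D y1 := hDA y1 hpy1
  have hsDy1p : star (D y1) * p = star (D y1) := by rw [← hps, ← star_mul, hpDy1]
  have hpsDy1 : p * star (D y1) = 0 := by rw [← hps, ← star_mul, hDy1p, star_zero]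
  -- Leibniz on {x1, y1, p}
  have key : D x1 * star y1 + x1 * star (D y1) = 0 := by
    have h1 : optp x1 y1 p = (2⁻¹ : ℂ) • (x1 * star y1) := by
      rw [optp, mul_assoc x1, hsy1p, hpsy1, zero_mul, add_zero]
    have hd : D (optp x1 y1 p) = 0 := by
      rw [h1, map_smul, hD0 (x1 * star y1) (by
        rw [← mul_assoc, hpx1, mul_assoc, hsy1p]), smul_zero]
    have h2 := hLeib x1 y1 p hpx1 hpy1 hp
    rw [hd, hDp] at h2
    have h3 : optp (D x1) y1 p = (2⁻¹ : ℂ) • (D x1 * star y1) := by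
      rw [optp, mul_assoc (D x1), hsy1p, hpsy1, zero_mul, add_zero]
    have h4 : optp x1 (D y1) p = (2⁻¹ : ℂ) • (x1 * star (D y1)) := by
      rw [optp, mul_assoc x1, hsDy1p, hpsDy1, zero_mul, add_zero]
    have h5 : optp x1 y1 (0 : M) = 0 := by simp [optp]
    rw [h3, h4, h5, add_zero, ← smul_add] at h2
    have h6 : (0 : M) = D x1 * star y1 + x1 * star (D y1) :=
      cancel _ _ (by rw [smul_zero]; exact h2)
    exact h6.symm
  -- assemble
  have ha : D x * star y = D x1 * star y1 := by
    have : star y = star y1 + p * star y := by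
      rw [hy1def, star_sub, star_mul, hps, sub_add_cancel]
    rw [← hDx1, this, mul_add, ← mul_assoc, hDx1p, zero_mul, add_zero]
  have hb : x * star (D y) = x1 * star (D y1) := by
    have hxs : x = x1 + x * p := by rw [hx1def, sub_add_cancel]
    rw [← hDy1]
    conv_lhs => rw [hxs]
    rw [add_mul, mul_assoc, hpsDy1, mul_zero, add_zero]
  rw [ha, hb, key]
end

section
/- Let M be a *-algebra of operators, p a projection, and Δ a 2-local triple derivation on A = pM. Suppose there is a nondegenerate sesquilinear form ⟨·,·⟩ on A such that every triple derivation D on A satisfies ⟨D(x),y⟩ = −⟨x,D(y)⟩. Then Δ is additive: Δ(x+y) = Δ(x) + Δ(y) for all x, y ∈ A. -/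
lemma optp_sub_left {M : Type*} [Ring M] [Algebra ℂ M] [StarRing M] (x x' y z : M) :
    optp (x - x') y z = optp x y z - optp x' y z := by
  simp [optp, sub_mul, mul_sub, smul_sub]; abel

lemma optp_sub_mid {M : Type*} [Ring M] [Algebra ℂ M] [StarRing M] (x y y' z : M) :
    optp x (y - y') z = optp x y z - optp x y' z := by
  simp [optp, sub_mul, mul_sub, star_sub, smul_sub]; abel

lemma optp_sub_right {M : Type*} [Ring M] [Algebra ℂ M] [StarRing M] (x y z z' : M) :
    optp x y (z - z') = optp x y z - optp x y z' := by
  simp [optp, sub_mul, mul_sub, smul_sub]; abel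

/-- If there is a nondegenerate sesquilinear form on `A = pM` with respect
to which every triple derivation is skew-adjoint, then every 2-local triple derivation
on `A` is additive. -/
theorem two_local_triple_derivation_additive_of_skew_form
    {M : Type*} [Ring M] [Algebra ℂ M] [StarRing M] [StarModule ℂ M]
    (p : M) (hp : p * p = p) (hps : star p = p)
    (B : M → M → ℂ)
    (hnondeg : ∀ x : M, p * x = x → (∀ y : M, p * y = y → B x y = 0) → x = 0)
    (hskew : ∀ D : M →ₗ[ℂ] M,
      (∀ w : M, p * w = w → p * D w = D w) →
      (∀ a b c : M, p * a = a → p * b = b → p * c = c →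
        D (optp a b c) = optp (D a) b c + optp a (D b) c + optp a b (D c)) →
      ∀ x y : M, p * x = x → p * y = y → B (D x) y = -B x (D y))
    (Δ : M → M)
    (h2local : ∀ x y : M, p * x = x → p * y = y → ∃ D : M →ₗ[ℂ] M,
      (∀ w : M, p * w = w → p * D w = D w) ∧
      (∀ a b c : M, p * a = a → p * b = b → p * c = c →
        D (optp a b c) = optp (D a) b c + optp a (D b) c + optp a b (D c)) ∧
      Δ x = D x ∧ Δ y = D y) :
    ∀ x y : M, p * x = x → p * y = y → Δ (x + y) = Δ x + Δ y := by
  -- the zero map is a triple derivation, whence `B 0 z = 0` on `A`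
  have hB0 : ∀ z : M, p * z = z → B 0 z = 0 := by
    intro z hz
    have h0 := hskew 0 (by intro w hw; simp)
      (by intro a b c _ _ _; simp [optp])
    have h00 := h0 0 0 (mul_zero p) (mul_zero p)
    simp only [LinearMap.zero_apply] at h00
    have hB00 : B 0 0 = 0 := by linear_combination h00 / 2
    have h0z := h0 0 z (mul_zero p) hz
    simp only [LinearMap.zero_apply] at h0z
    rw [h0z, hB00, neg_zero]
  -- differences of triple derivations are triple derivations, hence skew
  have hsub : ∀ (D D' : M →ₗ[ℂ] M),
      (∀ w : M, p * w = w → p * D w = D w) →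
      (∀ a b c : M, p * a = a → p * b = b → p * c = c →
        D (optp a b c) = optp (D a) b c + optp a (D b) c + optp a b (D c)) →
      (∀ w : M, p * w = w → p * D' w = D' w) →
      (∀ a b c : M, p * a = a → p * b = b → p * c = c →
        D' (optp a b c) = optp (D' a) b c + optp a (D' b) c + optp a b (D' c)) →
      ∀ u v : M, p * u = u → p * v = v → B ((D - D') u) v = -B u ((D - D') v) := by
    intro D D' hDp hDl hD'p hD'l
    refine hskew (D - D') ?_ ?_
    · intro w hw
      simp only [LinearMap.sub_apply, mul_sub, hDp w hw, hD'p w hw]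
    · intro a b c ha hb hc
      simp only [LinearMap.sub_apply, hDl a b c ha hb hc, hD'l a b c ha hb hc,
        optp_sub_left, optp_sub_mid, optp_sub_right]
      abel
  intro x y hx hy
  have hxy : p * (x + y) = x + y := by rw [mul_add, hx, hy]
  obtain ⟨D₀, hD₀p, hD₀l, hD₀x, hD₀y⟩ := h2local x y hx hy
  -- the key orthogonality
  have key : ∀ z : M, p * z = z → B (Δ (x + y) - (Δ x + Δ y)) z = 0 := by
    intro z hz
    obtain ⟨E, hEp, hEl, hE1, hEz⟩ := h2local (x + y) z hxy hz
    obtain ⟨F, hFp, hFl, hFx, hFz⟩ := h2local x z hx hz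
    obtain ⟨G, hGp, hGl, hGy, hGz⟩ := h2local y z hy hz
    -- step 1 : B y (Δ z - D₀ z) = 0, using G - D₀ which kills y
    have h1 := hsub G D₀ hGp hGl hD₀p hD₀l y z hy hz
    have hGy0 : (G - D₀) y = 0 := by
      simp only [LinearMap.sub_apply, ← hGy, ← hD₀y, sub_self]
    rw [hGy0, hB0 z hz] at h1
    have hys : B y ((G - D₀) z) = 0 := by
      have := h1.symm
      rwa [neg_eq_zero] at this
    -- step 2 : B (F y - D₀ y) z = 0, since (F - D₀) z = (G - D₀) z
    have hFGz : (F - D₀) z = (G - D₀) z := by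
      simp only [LinearMap.sub_apply, ← hFz, ← hGz]
    have h2 := hsub F D₀ hFp hFl hD₀p hD₀l y z hy hz
    rw [hFGz, hys, neg_zero] at h2
    -- step 3 : B (x+y) ((F - D₀) z) = 0, since (F - D₀) x = 0
    have hFx0 : (F - D₀) x = 0 := by
      simp only [LinearMap.sub_apply, ← hFx, ← hD₀x, sub_self]
    have h3 := hsub F D₀ hFp hFl hD₀p hD₀l (x + y) z hxy hz
    rw [map_add, hFx0, zero_add, h2] at h3
    have hxys : B (x + y) ((F - D₀) z) = 0 := by
      have := h3.symm
      rwa [neg_eq_zero] at this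
    -- step 4 : conclude, since (E - D₀) z = (F - D₀) z and (E - D₀)(x+y) = Δ(x+y) - (Δx + Δy)
    have hEFz : (E - D₀) z = (F - D₀) z := by
      simp only [LinearMap.sub_apply, ← hEz, ← hFz]
    have h4 := hsub E D₀ hEp hEl hD₀p hD₀l (x + y) z hxy hz
    rw [hEFz, hxys, neg_zero] at h4
    have hw : (E - D₀) (x + y) = Δ (x + y) - (Δ x + Δ y) := by
      rw [LinearMap.sub_apply, ← hE1, map_add, ← hD₀x, ← hD₀y]
    rwa [hw] at h4
  -- Δ maps A into A
  have hΔxy : p * Δ (x + y) = Δ (x + y) := by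
    obtain ⟨E, hEp, _, hE1, _⟩ := h2local (x + y) (x + y) hxy hxy
    rw [hE1]; exact hEp (x + y) hxy
  have hΔx : p * Δ x = Δ x := by rw [hD₀x]; exact hD₀p x hx
  have hΔy : p * Δ y = Δ y := by rw [hD₀y]; exact hD₀p y hy
  have hwp : p * (Δ (x + y) - (Δ x + Δ y)) = Δ (x + y) - (Δ x + Δ y) := by
    rw [mul_sub, mul_add, hΔxy, hΔx, hΔy]
  have := hnondeg _ hwp key
  have h := sub_eq_zero.mp this
  simpa using h
end
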